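/- Let R be a square matrix over ℂ with graded components (R^j)_t (i.e., (·)_t extracts degree-t parts compatible with conjugation by z^μ), and define the matrix-valued formal power series A_{x,k,t}(y) := Σ_{m=-1}^∞ Σ_{k₁=k}^{m+1} C(k₁,k)·Σ_{k₂≥k₁} ((-1)^{k₂-k₁}/k₂!)·[k₂ choose k₁]·C(x, m+1-k₂)·(R^{k₁-k})_t·y^{m+1}. Then A_{x,k,t}(y) = (1/k!)·(1+y)^x·log^k(1+y)·((1+y)^R)_t, where ((1+y)^R)_t := Σ_β (1/β!)·log^β(1+y)·(R^β)_t. -/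

import Mathlib

open Finset

/-- Generalized binomial coefficient `C(x, n) = x(x-1)⋯(x-n+1)/n!` as a function of `x : ℚ`. -/
noncomputable def myChoose (x : ℚ) (n : ℕ) : ℚ :=
  (∏ i ∈ Finset.range n, (x - (i : ℚ))) / (n.factorial : ℚ)

/-- Unsigned Stirling numbers of the first kind, `(x)_n = Σ_k stirling1 n k · x^k`. -/
def stirling1 : ℕ → ℕ → ℕ
  | 0, 0 => 1
  | 0, _ + 1 => 0
  | n + 1, 0 => n * stirling1 n 0
  | n + 1, k + 1 => n * stirling1 n (k + 1) + stirling1 n k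

/-- Stirling numbers of the second kind. -/
def stirling2 : ℕ → ℕ → ℕ
  | 0, 0 => 1
  | 0, _ + 1 => 0
  | _ + 1, 0 => 0
  | n + 1, k + 1 => (k + 1) * stirling2 n (k + 1) + stirling2 n k

/-- The formal power series `log(1+y) = Σ_{n ≥ 1} (-1)^{n-1} y^n / n`. -/
noncomputable def log1p : PowerSeries ℚ :=
  PowerSeries.mk fun n => if n = 0 then 0 else (-1 : ℚ) ^ (n + 1) / (n : ℚ)

/-- The formal binomial series `(1+y)^x = Σ_n C(x,n) y^n`. -/
noncomputable def binomSeries (x : ℚ) : PowerSeries ℚ :=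
  PowerSeries.mk fun n => myChoose x n

/-- `A_{k,x}(y) = (1/k!) (1+y)^x log^k(1+y)`. -/
noncomputable def Aser (k : ℕ) (x : ℚ) : PowerSeries ℚ :=
  ((k.factorial : ℚ)⁻¹) • (binomSeries x * log1p ^ k)

/-- Formal derivative in `y`. -/
noncomputable def Dy (f : PowerSeries ℚ) : PowerSeries ℚ :=
  PowerSeries.mk fun n => ((n + 1 : ℕ) : ℚ) * PowerSeries.coeff (n + 1) f

/-- Degree-`r` graded component of a matrix w.r.t. the grading induced by `z^μ`-conjugation. -/
def gradePart {l : ℕ} (μ : Fin l → ℤ) (P : Matrix (Fin l) (Fin l) ℚ) (r : ℕ) :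
    Matrix (Fin l) (Fin l) ℚ :=
  Matrix.of fun α β => if μ α - μ β = (r : ℤ) then P α β else 0

/-!
The series `log(1+y)^j / j!` is the exponential generating function of the signed Stirling
numbers of the first kind: both sides vanish at `y = 0` and satisfy `(1+y) f_{j+1}' = f_j`,
and `1+y` is a unit. Hence `(1/k!) log^k(1+y) · (1/β!) log^β(1+y)` is `C(k+β,k)` times that
generating function for `k+β`, and multiplying by `(1+y)^x` gives, coefficient by coefficient,
the factor of `(R^β)_t` on the left-hand side.
-/

open PowerSeries Finset Nat

theorem stirling1_eq_stirlingFirst : ∀ n k, stirling1 n k = stirlingFirst n k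
  | 0, 0 | 0, _ + 1 | 1, 0 => rfl
  | n + 2, 0 => by
    change (n + 1) * stirling1 (n + 1) 0 = 0
    simp [stirling1_eq_stirlingFirst (n + 1) 0]
  | n + 1, k + 1 => by
    simp [stirling1, stirlingFirst_succ_succ, stirling1_eq_stirlingFirst n]

theorem coeff_derivative_log1p (n : ℕ) : coeff n (d⁄dX ℚ log1p) = (-1) ^ n := by
  rw [coeff_derivative, log1p, coeff_mk, if_neg n.succ_ne_zero]
  field_simp
  push_cast
  ring

theorem one_add_X_mul_derivative_log1p : (1 + X) * d⁄dX ℚ log1p = 1 := by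
  ext (_ | n)
  · rw [add_mul, one_mul, map_add, coeff_zero_X_mul, coeff_derivative_log1p]
    simp
  · simp [add_mul, coeff_succ_X_mul, coeff_derivative_log1p, coeff_one, pow_succ]

noncomputable def stirlingFirstEGF (j : ℕ) : ℚ⟦X⟧ :=
  mk fun n => (-1) ^ (n + j) * stirlingFirst n j / n !

theorem one_add_X_mul_derivative_stirlingFirstEGF (j : ℕ) :
    (1 + X) * d⁄dX ℚ (stirlingFirstEGF (j + 1)) = stirlingFirstEGF j := by
  ext (_ | n)
  · rw [add_mul, one_mul, map_add, coeff_zero_X_mul, coeff_derivative]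
    simp [stirlingFirstEGF, stirlingFirst_succ_succ, pow_add]
  · simp only [add_mul, one_mul, map_add, coeff_succ_X_mul, coeff_derivative, stirlingFirstEGF,
      coeff_mk]
    rw [stirlingFirst_succ_succ (n + 1)]
    push_cast [factorial_succ]
    field_simp
    ring

theorem log1p_pow_eq_smul_stirlingFirstEGF (j : ℕ) :
    log1p ^ j = (j ! : ℚ) • stirlingFirstEGF j := by
  induction j with
  | zero =>
    ext (_ | n) <;> simp [stirlingFirstEGF, coeff_one]
  | succ j ih =>
    refine derivative.ext ?_ ?_
    · have hunit : IsUnit (1 + X : ℚ⟦X⟧) := by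
        simp [isUnit_iff_constantCoeff]
      refine hunit.mul_left_cancel ?_
      calc (1 + X) * d⁄dX ℚ (log1p ^ (j + 1))
          = (j + 1 : ℚ) • (log1p ^ j * ((1 + X) * d⁄dX ℚ log1p)) := by
            rw [derivative_pow, Nat.add_sub_cancel, Algebra.smul_def]
            push_cast
            ring
        _ = (1 + X) * d⁄dX ℚ (((j + 1)! : ℚ) • stirlingFirstEGF (j + 1)) := by
          rw [Derivation.map_smul, mul_smul_comm, one_add_X_mul_derivative_stirlingFirstEGF,
            one_add_X_mul_derivative_log1p, mul_one, ih, smul_smul, factorial_succ]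
          push_cast
          ring_nf
    · rw [← coeff_zero_eq_constantCoeff_apply, ← coeff_zero_eq_constantCoeff_apply]
      simp [stirlingFirstEGF, log1p]

theorem map_algebraMap_mul_mk_sum_smul {S A : Type*} [CommSemiring S] [Semiring A] [Algebra S A]
    (f : S⟦X⟧) (g : ℕ → S⟦X⟧) (M : ℕ → A)
    (hg : ∀ β n, n < β → coeff n (g β) = 0) :
    map (algebraMap S A) f * mk (fun N => ∑ β ∈ range (N + 1), coeff N (g β) • M β) =
      mk fun N => ∑ β ∈ range (N + 1), coeff N (f * g β) • M β := by
  ext N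
  have hextend : ∀ ij ∈ antidiagonal N,
      ∑ β ∈ range (ij.2 + 1), coeff ij.2 (g β) • M β =
        ∑ β ∈ range (N + 1), coeff ij.2 (g β) • M β := by
    intro ij hij
    refine sum_subset (range_subset_range.2 ?_) fun β _ hβ => ?_
    · have := mem_antidiagonal.1 hij
      omega
    · rw [hg β ij.2 (by simpa using hβ), zero_smul]
  simp only [coeff_mul, coeff_mk, coeff_map, sum_smul]
  rw [sum_congr rfl fun ij hij => by rw [hextend ij hij], sum_comm]
  simp only [mul_sum, ← Algebra.smul_def, smul_smul]

theorem neg_one_pow_add_of_le {R : Type*} [Monoid R] [HasDistribNeg R] {j n : ℕ} (h : j ≤ n) :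
    (-1 : R) ^ (n + j) = (-1) ^ (n - j) := by
  obtain ⟨c, rfl⟩ := Nat.exists_eq_add_of_le h
  rw [Nat.add_sub_cancel_left, add_right_comm, ← two_mul, pow_add, pow_mul]
  simp

theorem coeff_binomSeries_mul_stirlingFirstEGF (x : ℚ) (j N : ℕ) :
    coeff N (binomSeries x * stirlingFirstEGF j) =
      ∑ k₂ ∈ Icc j N, (-1) ^ (k₂ - j) / k₂ ! * stirlingFirst k₂ j * myChoose x (N - k₂) := by
  have hsub : Icc j N ⊆ range (N + 1) := fun k₂ hk₂ => by
    simp only [mem_Icc, mem_range] at hk₂ ⊢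
    omega
  rw [mul_comm, coeff_mul, Nat.sum_antidiagonal_eq_sum_range_succ_mk, ← sum_subset hsub]
  · refine sum_congr rfl fun k₂ hk₂ => ?_
    rw [stirlingFirstEGF, binomSeries, coeff_mk, coeff_mk, neg_one_pow_add_of_le (mem_Icc.1 hk₂).1]
    ring
  · intro k₂ hk₂N hk₂
    have hlt : k₂ < j := by
      simp only [mem_range, mem_Icc, not_and, not_le] at hk₂N hk₂
      omega
    simp [stirlingFirstEGF, stirlingFirst_eq_zero_of_lt hlt]

theorem smul_log1p_pow_mul_smul_log1p_pow (k β : ℕ) :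
    ((k ! : ℚ)⁻¹ • log1p ^ k) * ((β ! : ℚ)⁻¹ • log1p ^ β) =
      ((k + β).choose k : ℚ) • stirlingFirstEGF (k + β) := by
  rw [smul_mul_smul_comm, ← pow_add, log1p_pow_eq_smul_stirlingFirstEGF, smul_smul,
    ← add_choose_mul_factorial_mul_factorial, choose_symm_add]
  push_cast
  field_simp

theorem coeff_Aser_mul_smul_log1p_pow (k β : ℕ) (x : ℚ) (N : ℕ) :
    coeff N (Aser k x * ((β ! : ℚ)⁻¹ • log1p ^ β)) =
      (k + β).choose k * ∑ k₂ ∈ Icc (k + β) N,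
        (-1) ^ (k₂ - (k + β)) / k₂ ! * stirlingFirst k₂ (k + β) * myChoose x (N - k₂) := by
  rw [Aser, smul_mul_assoc, mul_assoc, ← mul_smul_comm, ← smul_mul_assoc,
    smul_log1p_pow_mul_smul_log1p_pow, mul_smul_comm, coeff_smul, coeff_binomSeries_mul_stirlingFirstEGF, smul_eq_mul]

/-- the matrix-valued power series
`A_{x,k,t}(y) = Σ_{m≥-1} Σ_{k₁=k}^{m+1} C(k₁,k) Σ_{k₂≥k₁} ((-1)^{k₂-k₁}/k₂!) [k₂,k₁]
  C(x,m+1-k₂) (R^{k₁-k})_t y^{m+1}`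
equals `(1/k!)(1+y)^x log^k(1+y) ((1+y)^R)_t`, where
`((1+y)^R)_t = Σ_β (1/β!) log^β(1+y) (R^β)_t` (all sums encoded coefficientwise; the terms
with `k₂ > m+1` vanish since `C(x, negative) = 0`). -/
theorem stmt8 (l t : ℕ) (μ : Fin l → ℤ) (R : Matrix (Fin l) (Fin l) ℚ) (k : ℕ) (x : ℚ) :
    (PowerSeries.mk fun N => ∑ k₁ ∈ Finset.Icc k N, ∑ k₂ ∈ Finset.Icc k₁ N,
        ((k₁.choose k : ℚ) * ((-1 : ℚ) ^ (k₂ - k₁) / (k₂.factorial : ℚ)) *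
            (stirling1 k₂ k₁ : ℚ) * myChoose x (N - k₂)) • gradePart μ (R ^ (k₁ - k)) t) =
      PowerSeries.map (algebraMap ℚ (Matrix (Fin l) (Fin l) ℚ))
          (((k.factorial : ℚ)⁻¹) • (binomSeries x * log1p ^ k)) *
        PowerSeries.mk (fun N => ∑ β ∈ Finset.range (N + 1),
          (((β.factorial : ℚ)⁻¹) * PowerSeries.coeff N (log1p ^ β)) •
            gradePart μ (R ^ β) t) := by
  have horder (β n : ℕ) (h : n < β) : coeff n ((β ! : ℚ)⁻¹ • log1p ^ β) = 0 := by
    simp [log1p_pow_eq_smul_stirlingFirstEGF, stirlingFirstEGF, stirlingFirst_eq_zero_of_lt h]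
  have hrhs := map_algebraMap_mul_mk_sum_smul (Aser k x) _ (fun β => gradePart μ (R ^ β) t) horder
  simp only [coeff_smul, smul_eq_mul] at hrhs
  rw [show (k ! : ℚ)⁻¹ • (binomSeries x * log1p ^ k) = Aser k x from rfl, hrhs]
  ext N : 1
  have hvanish : ∀ β ∈ range (N + 1), β ∉ range (N + 1 - k) →
      coeff N (Aser k x * ((β ! : ℚ)⁻¹ • log1p ^ β)) • gradePart μ (R ^ β) t = 0 := by
    intro β _ hβ
    rw [coeff_Aser_mul_smul_log1p_pow, Icc_eq_empty (by simp at hβ; omega), sum_empty, mul_zero,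
      zero_smul]
  rw [coeff_mk, coeff_mk, ← Ico_add_one_right_eq_Icc, sum_Ico_eq_sum_range,
    ← sum_subset (range_subset_range.2 (Nat.sub_le _ _)) hvanish]
  refine sum_congr rfl fun β _ => ?_
  rw [coeff_Aser_mul_smul_log1p_pow, mul_sum, sum_smul, Nat.add_sub_cancel_left]
  refine sum_congr rfl fun k₂ _ => ?_
  rw [stirling1_eq_stirlingFirst]
  congr 1
  ring
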